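/- arXiv:1408.2878 — 3 statements merged into one kernel-verified Lean document; each statement's English description precedes it below -/
import Mathlib

section
/- Let G be a locally compact Hausdorff group with left Haar measure μ and let A be a G-Banach algebra. For ξ^<, ξ^> ∈ C_c(G, A) and α ∈ C_c(G×G, A), define ⟨ξ^<, ξ^>⟩_A := ∫_G ξ^<(r)·(r·ξ^>(r⁻¹)) dμ(r), the right module action (ξ^< · α)(s) := ∫_G ξ^<(r)·(r·α(r⁻¹s, r⁻¹)) dμ(r), and the left module action (α · ξ^>)(t) := ∫_G α(r,t)·(r·ξ^>(r⁻¹t)) dμ(r). Then ⟨ξ^< · α, ξ^>⟩_A = ⟨ξ^<, α · ξ^>⟩_A. -/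
open MeasureTheory

/-! After pulling `act s (ξ^>(s⁻¹))` into the inner integral, the left-hand side is the iterated
integral of a continuous compactly supported kernel on `G × G`, so Fubini applies. For fixed `r`
the substitution `s = r u` (left invariance of `μ`) and the multiplicativity of the action turn
the `s`-integrand into `ξ^<(r) · r·(α(u, r⁻¹) · u·ξ^>(u⁻¹r⁻¹))`, and the constants `ξ^<(r)` and the
continuous linear map `r·` come out of the `u`-integral. -/

lemma HasCompactSupport.comp_prodMk_const {X Y R : Type*} [TopologicalSpace X] [R1Space X]
    [TopologicalSpace Y] [Zero R] {f : X × Y → R} (hf : HasCompactSupport f) (y : Y) :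
    HasCompactSupport fun x => f (x, y) :=
  HasCompactSupport.intro (hf.image continuous_fst) fun x hx =>
    image_eq_zero_of_notMem_tsupport fun hmem => hx ⟨(x, y), hmem, rfl⟩

lemma HasCompactSupport.mul_prod_mul {X Y R : Type*} [TopologicalSpace X] [TopologicalSpace Y]
    [MulZeroClass R] {f : X → R} {g : Y → R} (hf : HasCompactSupport f)
    (hg : HasCompactSupport g) (k : X × Y → R) :
    HasCompactSupport fun p : X × Y => f p.1 * k p * g p.2 := by
  refine .intro' (hf.prod hg) ((isClosed_tsupport f).prod (isClosed_tsupport g)) fun p hp => ?_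
  rcases not_and_or.mp hp with hp | hp <;> simp [image_eq_zero_of_notMem_tsupport hp]

section Representation

variable {G : Type*} [Group G] {A : Type*} [NormedRing A] [NormedAlgebra ℂ A]

def actCLM [TopologicalSpace G] (act : G → A → A)
    (hact_cont : Continuous fun p : G × A => act p.1 p.2)
    (hact_add : ∀ g a b, act g (a + b) = act g a + act g b)
    (hact_smul : ∀ g (c : ℂ) a, act g (c • a) = c • act g a) (g : G) : A →L[ℂ] A where
  toFun := act g
  map_add' := hact_add g
  map_smul' := hact_smul g
  cont := hact_cont.comp (continuous_const.prodMk continuous_id)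

lemma hasCompactSupport_apply_inv [TopologicalSpace G] [IsTopologicalGroup G]
    (ρ : G → A →L[ℂ] A) {ξ : G → A} (hξ : HasCompactSupport ξ) :
    HasCompactSupport fun s => ρ s (ξ s⁻¹) :=
  HasCompactSupport.intro hξ.inv fun s hs => by
    rw [image_eq_zero_of_notMem_tsupport (Set.mem_inv.not.mp hs), map_zero]

lemma integral_mul_apply_translate [MeasurableSpace G] [MeasurableMul G] (μ : Measure G)
    [μ.IsMulLeftInvariant] [CompleteSpace A] (ρ : G → A →L[ℂ] A)
    (hmul : ∀ g h a, ρ (g * h) a = ρ g (ρ h a)) (hring : ∀ g a b, ρ g (a * b) = ρ g a * ρ g b)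
    (c : A) (r : G) {β ξ : G → A} (hint : Integrable (fun u => β u * ρ u (ξ (u⁻¹ * r⁻¹))) μ) :
    ∫ s, c * ρ r (β (r⁻¹ * s)) * ρ s (ξ s⁻¹) ∂μ
      = c * ρ r (∫ u, β u * ρ u (ξ (u⁻¹ * r⁻¹)) ∂μ) := by
  have hsubst : ∀ u, c * ρ r (β (r⁻¹ * (r * u))) * ρ (r * u) (ξ (r * u)⁻¹)
      = c * ρ r (β u * ρ u (ξ (u⁻¹ * r⁻¹))) := fun u => by
    rw [inv_mul_cancel_left, mul_inv_rev, hmul, hring, mul_assoc]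
  calc ∫ s, c * ρ r (β (r⁻¹ * s)) * ρ s (ξ s⁻¹) ∂μ
      = ∫ u, c * ρ r (β u * ρ u (ξ (u⁻¹ * r⁻¹))) ∂μ := by
        rw [← integral_mul_left_eq_self _ r]
        simp only [hsubst]
    _ = c * ∫ u, ρ r (β u * ρ u (ξ (u⁻¹ * r⁻¹))) ∂μ :=
        integral_const_mul_of_integrable ((ρ r).integrable_comp hint)
    _ = c * ρ r (∫ u, β u * ρ u (ξ (u⁻¹ * r⁻¹)) ∂μ) := by
        rw [(ρ r).integral_comp_comm hint]

end Representation

theorem stmt_5_general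
    {G : Type*} [Group G] [TopologicalSpace G] [IsTopologicalGroup G]
    [MeasurableSpace G] [BorelSpace G]
    (μ : Measure G) [μ.IsHaarMeasure]
    {A : Type*} [NormedRing A] [NormedAlgebra ℂ A] [CompleteSpace A]
    -- `A` is a `G`-Banach algebra:
    (act : G → A → A)
    (hact_cont : Continuous fun p : G × A => act p.1 p.2)
    (hact_mul : ∀ g h a, act (g * h) a = act g (act h a))
    (hact_add : ∀ g a b, act g (a + b) = act g a + act g b)
    (hact_smul : ∀ g (c : ℂ) a, act g (c • a) = c • act g a)
    (hact_ring : ∀ g a b, act g (a * b) = act g a * act g b)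
    -- `ξ^<, ξ^> ∈ C_c(G, A)` and `α ∈ C_c(G×G, A)`:
    (ξl ξr : G → A) (α : G × G → A)
    (hξlc : Continuous ξl) (hξls : HasCompactSupport ξl)
    (hξrc : Continuous ξr) (hξrs : HasCompactSupport ξr)
    (hαc : Continuous α) (hαs : HasCompactSupport α) :
    -- `⟨ξ^< · α, ξ^>⟩_A = ⟨ξ^<, α · ξ^>⟩_A`:
    ∫ s, (∫ r, ξl r * act r (α (r⁻¹ * s, r⁻¹)) ∂μ) * act s (ξr s⁻¹) ∂μ
      = ∫ r, ξl r * act r (∫ u, α (u, r⁻¹) * act u (ξr (u⁻¹ * r⁻¹)) ∂μ) ∂μ := by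
  set ρ := actCLM act hact_cont hact_add hact_smul
  have hρ_comp : ∀ {X : Type _} [TopologicalSpace X] {g : X → G} {a : X → A},
      Continuous g → Continuous a → Continuous fun x => ρ (g x) (a x) :=
    fun hg ha => hact_cont.comp (hg.prodMk ha)
  have hint_left : ∀ s, Integrable (fun r => ξl r * ρ r (α (r⁻¹ * s, r⁻¹))) μ := fun s =>
    (hξlc.mul (hρ_comp continuous_id (hαc.comp ((continuous_inv.mul continuous_const).prodMk
      continuous_inv)))).integrable_of_hasCompactSupport hξls.mul_right
  have hint_right : ∀ r : G, Integrable (fun u => α (u, r⁻¹) * ρ u (ξr (u⁻¹ * r⁻¹))) μ :=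
    fun r => ((hαc.comp (continuous_id.prodMk continuous_const)).mul (hρ_comp continuous_id
      (hξrc.comp (continuous_inv.mul continuous_const)))).integrable_of_hasCompactSupport
      (hαs.comp_prodMk_const r⁻¹).mul_right
  calc ∫ s, (∫ r, ξl r * act r (α (r⁻¹ * s, r⁻¹)) ∂μ) * act s (ξr s⁻¹) ∂μ
      = ∫ s, ∫ r, ξl r * ρ r (α (r⁻¹ * s, r⁻¹)) * ρ s (ξr s⁻¹) ∂μ ∂μ :=
        integral_congr_ae <| .of_forall fun s =>
          (integral_mul_const_of_integrable (hint_left s)).symm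
    _ = ∫ r, ∫ s, ξl r * ρ r (α (r⁻¹ * s, r⁻¹)) * ρ s (ξr s⁻¹) ∂μ ∂μ := by
        refine (integral_integral_swap_of_hasCompactSupport ?_ ?_).symm
        · exact ((hξlc.comp continuous_fst).mul (hρ_comp continuous_fst (hαc.comp
            ((continuous_fst.inv.mul continuous_snd).prodMk continuous_fst.inv)))).mul
            (hρ_comp continuous_snd (hξrc.comp continuous_snd.inv))
        · exact hξls.mul_prod_mul (hasCompactSupport_apply_inv ρ hξrs) _
    _ = ∫ r, ξl r * act r (∫ u, α (u, r⁻¹) * act u (ξr (u⁻¹ * r⁻¹)) ∂μ) ∂μ :=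
        integral_congr_ae (.of_forall fun r => integral_mul_apply_translate μ ρ hact_mul
          hact_ring (ξl r) r (hint_right r))

/-- `⟨ξ^< · α, ξ^>⟩_A = ⟨ξ^<, α · ξ^>⟩_A` for the module actions of
`L¹(G⋉G,A)` on the pair `(L¹(G,A), C₀(G,A))`. -/
theorem stmt_5
    {G : Type*} [Group G] [TopologicalSpace G] [IsTopologicalGroup G]
    [LocallyCompactSpace G] [T2Space G] [MeasurableSpace G] [BorelSpace G]
    (μ : Measure G) [μ.IsHaarMeasure]
    {A : Type*} [NormedRing A] [NormedAlgebra ℂ A] [CompleteSpace A]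
    -- `A` is a `G`-Banach algebra:
    (act : G → A → A)
    (hact_cont : Continuous fun p : G × A => act p.1 p.2)
    (hact_one : ∀ a, act 1 a = a)
    (hact_mul : ∀ g h a, act (g * h) a = act g (act h a))
    (hact_add : ∀ g a b, act g (a + b) = act g a + act g b)
    (hact_smul : ∀ g (c : ℂ) a, act g (c • a) = c • act g a)
    (hact_ring : ∀ g a b, act g (a * b) = act g a * act g b)
    (hact_isom : ∀ g a, ‖act g a‖ = ‖a‖)
    -- `ξ^<, ξ^> ∈ C_c(G, A)` and `α ∈ C_c(G×G, A)`:
    (ξl ξr : G → A) (α : G × G → A)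
    (hξlc : Continuous ξl) (hξls : HasCompactSupport ξl)
    (hξrc : Continuous ξr) (hξrs : HasCompactSupport ξr)
    (hαc : Continuous α) (hαs : HasCompactSupport α) :
    -- `⟨ξ^< · α, ξ^>⟩_A = ⟨ξ^<, α · ξ^>⟩_A`:
    ∫ s, (∫ r, ξl r * act r (α (r⁻¹ * s, r⁻¹)) ∂μ) * act s (ξr s⁻¹) ∂μ
      = ∫ r, ξl r * act r (∫ u, α (u, r⁻¹) * act u (ξr (u⁻¹ * r⁻¹)) ∂μ) ∂μ :=
  stmt_5_general μ act hact_cont hact_mul hact_add hact_smul hact_ring ξl ξr α hξlc hξls hξrc hξrs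
    hαc hαs
end

section
/- Let G be a locally compact Hausdorff group with left Haar measure μ and let A be a G-Banach algebra. For ξ^< ∈ C_c(G, A) and α, α' ∈ C_c(G×G, A), define the convolution (α * α')(s,t) := ∫_G α(r,t)·(r·α'(r⁻¹s, r⁻¹t)) dμ(r) and the right module action (ξ^< · α)(s) := ∫_G ξ^<(r)·(r·α(r⁻¹s, r⁻¹)) dμ(r). Then: (i) ξ^< · (α * α') = (ξ^< · α) · α'; and (ii) ‖ξ^< · α‖_{L¹} ≤ ‖ξ^<‖_{L¹} · ‖α‖₁. -/
/-!
Both claims reduce to Fubini's theorem for continuous compactly supported functions on `G × G`,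
which needs no σ-finiteness of the Haar measure. For (i), the substitution `v = r u` (left
invariance of `μ`) turns both sides into the double integral of
`ξ(r) · r·α(r⁻¹v, r⁻¹) · v·α'(v⁻¹s, v⁻¹)` over `(r, v)`, taken in the two orders. For (ii),
since `G` acts isometrically, `‖ξ · α‖` is dominated pointwise by `‖ξ‖ · ‖α‖` formed with the
trivial action on `ℝ`; swapping the integrals and substituting `u = r⁻¹ s` gives
`∫ ‖ξ(r)‖ ∫ ‖α(u, r⁻¹)‖ du dr ≤ ‖ξ‖_{L¹} ‖α‖₁`.
-/

open MeasureTheory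

/-- The convolution product on `C_c(G×G, A)` underlying `L¹(G⋉G, A)`. -/
noncomputable def conv2 {G A : Type*} [Group G] [MeasurableSpace G]
    [NormedRing A] [NormedSpace ℝ A]
    (μ : Measure G) (act : G → A → A) (ξ η : G × G → A) : G × G → A :=
  fun p => ∫ r, ξ (r, p.2) * act r (η (r⁻¹ * p.1, r⁻¹ * p.2)) ∂μ

/-- The norm `‖ξ‖₁ = ⨆ t, ∫ ‖ξ (s,t)‖ dμ s` on `C_c(G×G, A)`. -/
noncomputable def onenorm {G A : Type*} [MeasurableSpace G] [NormedAddCommGroup A]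
    (μ : Measure G) (ξ : G × G → A) : ℝ :=
  ⨆ t : G, ∫ s, ‖ξ (s, t)‖ ∂μ

/-- The right module action `(ξ^< · α)(s) := ∫ ξ^<(r)·(r·α(r⁻¹s, r⁻¹)) dμ(r)` of
`C_c(G×G,A)` on `C_c(G,A) ⊆ L¹(G,A)`. -/
noncomputable def ract {G A : Type*} [Group G] [MeasurableSpace G]
    [NormedRing A] [NormedSpace ℝ A]
    (μ : Measure G) (act : G → A → A) (ξ : G → A) (α : G × G → A) : G → A :=
  fun s => ∫ r, ξ r * act r (α (r⁻¹ * s, r⁻¹)) ∂μ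

open Function Set

section ParametricIntegral

variable {X Y E : Type*} [TopologicalSpace X] [TopologicalSpace Y] [NormedAddCommGroup E]

lemma HasCompactSupport.comp_prodMk_const_s7 [R1Space X] {g : X × Y → E}
    (hg : HasCompactSupport g) (y : Y) : HasCompactSupport fun x => g (x, y) :=
  .of_support_subset_isCompact (hg.image continuous_fst) fun x hx =>
    ⟨(x, y), subset_tsupport g hx, rfl⟩

variable [MeasurableSpace Y] [NormedSpace ℝ E] {ν : Measure Y} {f : X → Y → E}

lemma hasCompactSupport_integral_of_hasCompactSupport_uncurry [R1Space X]
    (hfs : HasCompactSupport f.uncurry) : HasCompactSupport fun x => ∫ y, f x y ∂ν := by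
  refine .of_support_subset_isCompact (hfs.image continuous_fst) fun x hx => ?_
  obtain ⟨y, hy⟩ : ∃ y, f x y ≠ 0 := by
    by_contra! h
    simp [h] at hx
  exact ⟨(x, y), subset_tsupport _ hy, rfl⟩

variable [OpensMeasurableSpace Y]

lemma continuous_integral_of_hasCompactSupport_uncurry [IsFiniteMeasureOnCompacts ν]
    (hf : Continuous f.uncurry) (hfs : HasCompactSupport f.uncurry) :
    Continuous fun x => ∫ y, f x y ∂ν := by
  refine continuousOn_univ.mp <| continuousOn_integral_of_compact_support
    (hfs.image continuous_snd) (hf.continuousOn) fun x y _ hy => ?_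
  show f.uncurry (x, y) = 0
  exact image_eq_zero_of_notMem_tsupport fun h => hy ⟨(x, y), h, rfl⟩

end ParametricIntegral

section RightAction

variable {G A : Type*} [Group G] [TopologicalSpace G] [IsTopologicalGroup G] [NormedRing A]
  {act : G → A → A} {ξ : G → A} {α : G × G → A}

/-- `ract μ act ξ α s = ∫ r, ractKernel act ξ α s r ∂μ`. -/
def ractKernel (act : G → A → A) (ξ : G → A) (α : G × G → A) (s r : G) : A :=
  ξ r * act r (α (r⁻¹ * s, r⁻¹))

lemma continuous_ractKernel (hact : Continuous fun p : G × A => act p.1 p.2)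
    (hξ : Continuous ξ) (hα : Continuous α) : Continuous (ractKernel act ξ α).uncurry :=
  (hξ.comp continuous_snd).mul <| hact.comp <| continuous_snd.prodMk <|
    hα.comp <| (continuous_snd.inv.mul continuous_fst).prodMk continuous_snd.inv

lemma hasCompactSupport_ractKernel (hact : ∀ g, act g 0 = 0)
    (hξ : HasCompactSupport ξ) (hα : HasCompactSupport α) :
    HasCompactSupport (ractKernel act ξ α).uncurry := by
  refine .of_support_subset_isCompact
    ((hξ.mul (hα.image continuous_fst)).prod hξ) fun ⟨s, r⟩ hsr => ?_
  have hξr : ξ r ≠ 0 := left_ne_zero_of_mul hsr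
  have hαr : α (r⁻¹ * s, r⁻¹) ≠ 0 := fun h => right_ne_zero_of_mul hsr (by rw [h, hact])
  exact ⟨⟨r, subset_tsupport ξ hξr, r⁻¹ * s, ⟨_, subset_tsupport α hαr, rfl⟩,
    mul_inv_cancel_left r s⟩, subset_tsupport ξ hξr⟩

variable [MeasurableSpace G] [BorelSpace G] {μ : Measure G} [IsFiniteMeasureOnCompacts μ]

lemma integrable_ractKernel (hact : Continuous fun p : G × A => act p.1 p.2)
    (hξ : Continuous ξ) (hξs : HasCompactSupport ξ) (hα : Continuous α) (s : G) :
    Integrable (ractKernel act ξ α s) μ :=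
  ((continuous_ractKernel hact hξ hα).comp (continuous_const.prodMk continuous_id))
    |>.integrable_of_hasCompactSupport hξs.mul_right

variable [NormedSpace ℝ A]

lemma integrable_ract (hact : Continuous fun p : G × A => act p.1 p.2) (hact0 : ∀ g, act g 0 = 0)
    (hξ : Continuous ξ) (hξs : HasCompactSupport ξ) (hα : Continuous α)
    (hαs : HasCompactSupport α) : Integrable (ract μ act ξ α) μ :=
  (continuous_integral_of_hasCompactSupport_uncurry (continuous_ractKernel hact hξ hα)
    (hasCompactSupport_ractKernel hact0 hξs hαs)).integrable_of_hasCompactSupport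
    (hasCompactSupport_integral_of_hasCompactSupport_uncurry
      (hasCompactSupport_ractKernel hact0 hξs hαs))

end RightAction

section NormEstimate

variable {G A : Type*} [Group G] [TopologicalSpace G] [IsTopologicalGroup G]
  [MeasurableSpace G] [BorelSpace G] {μ : Measure G} [IsFiniteMeasureOnCompacts μ]

lemma bddAbove_range_integral_norm {E : Type*} [NormedAddCommGroup E] {α : G × G → E}
    (hα : Continuous α) (hαs : HasCompactSupport α) :
    BddAbove (range fun t => ∫ s, ‖α (s, t)‖ ∂μ) := by
  have hswap : HasCompactSupport (uncurry fun t s => ‖α (s, t)‖) :=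
    hαs.norm.comp_homeomorph (Homeomorph.prodComm G G)
  exact (continuous_integral_of_hasCompactSupport_uncurry (f := fun t s => ‖α (s, t)‖)
    (hα.norm.comp continuous_swap) hswap).bddAbove_range_of_hasCompactSupport
    (hasCompactSupport_integral_of_hasCompactSupport_uncurry hswap)

lemma integral_ract_trivialAction [μ.IsMulLeftInvariant] {ξ : G → ℝ} {α : G × G → ℝ}
    (hξ : Continuous ξ) (hξs : HasCompactSupport ξ) (hα : Continuous α)
    (hαs : HasCompactSupport α) :
    ∫ s, ract μ (fun _ => id) ξ α s ∂μ = ∫ r, ξ r * ∫ u, α (u, r⁻¹) ∂μ ∂μ := by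
  change ∫ s, ∫ r, ractKernel (fun _ => id) ξ α s r ∂μ ∂μ = _
  rw [integral_integral_swap_of_hasCompactSupport (continuous_ractKernel continuous_snd hξ hα)
      (hasCompactSupport_ractKernel (fun _ => rfl) hξs hαs)]
  refine integral_congr_ae (.of_forall fun r => ?_)
  simp only [ractKernel, id]
  rw [integral_const_mul, integral_mul_left_eq_self (fun u => α (u, r⁻¹)) r⁻¹]

variable [NormedRing A] [NormedSpace ℝ A] {act : G → A → A} {ξ : G → A} {α : G × G → A}

lemma norm_ract_le (hisom : ∀ g a, ‖act g a‖ = ‖a‖) (hξ : Continuous ξ)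
    (hξs : HasCompactSupport ξ) (hα : Continuous α) (s : G) :
    ‖ract μ act ξ α s‖ ≤ ract μ (fun _ => id) (‖ξ ·‖) (‖α ·‖) s := by
  refine norm_integral_le_of_norm_le
    (integrable_ractKernel continuous_snd hξ.norm hξs.norm hα.norm s) (.of_forall fun r => ?_)
  calc ‖ξ r * act r (α (r⁻¹ * s, r⁻¹))‖
      ≤ ‖ξ r‖ * ‖act r (α (r⁻¹ * s, r⁻¹))‖ := norm_mul_le _ _
    _ = ‖ξ r‖ * ‖α (r⁻¹ * s, r⁻¹)‖ := by rw [hisom]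

lemma integral_norm_ract_le [μ.IsMulLeftInvariant] (hisom : ∀ g a, ‖act g a‖ = ‖a‖)
    (hξ : Continuous ξ) (hξs : HasCompactSupport ξ) (hα : Continuous α)
    (hαs : HasCompactSupport α) :
    ∫ s, ‖ract μ act ξ α s‖ ∂μ ≤ (∫ s, ‖ξ s‖ ∂μ) * onenorm μ α := by
  calc ∫ s, ‖ract μ act ξ α s‖ ∂μ
      ≤ ∫ s, ract μ (fun _ => id) (‖ξ ·‖) (‖α ·‖) s ∂μ :=
        integral_mono_of_nonneg (.of_forall fun _ => norm_nonneg _)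
          (integrable_ract continuous_snd (fun _ => rfl) hξ.norm hξs.norm hα.norm hαs.norm)
          (.of_forall (norm_ract_le hisom hξ hξs hα))
    _ = ∫ r, ‖ξ r‖ * ∫ u, ‖α (u, r⁻¹)‖ ∂μ ∂μ :=
        integral_ract_trivialAction hξ.norm hξs.norm hα.norm hαs.norm
    _ ≤ ∫ r, ‖ξ r‖ * onenorm μ α ∂μ :=
        integral_mono_of_nonneg
          (.of_forall fun _ => mul_nonneg (norm_nonneg _) (integral_nonneg fun _ => norm_nonneg _))
          ((hξ.norm.integrable_of_hasCompactSupport hξs.norm).mul_const _)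
          (.of_forall fun r => mul_le_mul_of_nonneg_left
            (le_ciSup (bddAbove_range_integral_norm hα hαs) r⁻¹) (norm_nonneg _))
    _ = (∫ s, ‖ξ s‖ ∂μ) * onenorm μ α := integral_mul_const _ _

end NormEstimate

section Associativity

lemma act_zero_of_isometric {G A : Type*} [NormedAddCommGroup A] {act : G → A → A}
    (hisom : ∀ g a, ‖act g a‖ = ‖a‖) (g : G) : act g 0 = 0 :=
  norm_eq_zero.mp (by rw [hisom, norm_zero])

lemma integral_act_comm {G A X : Type*} [NormedAddCommGroup A] [NormedSpace ℂ A]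
    [CompleteSpace A]
    [MeasurableSpace X] {ν : Measure X} {act : G → A → A}
    (hadd : ∀ g a b, act g (a + b) = act g a + act g b)
    (hsmul : ∀ g (c : ℂ) a, act g (c • a) = c • act g a) (hisom : ∀ g a, ‖act g a‖ = ‖a‖)
    (g : G) (f : X → A) : ∫ x, act g (f x) ∂ν = act g (∫ x, f x ∂ν) :=
  let actₗᵢ : A →ₗᵢ[ℂ] A :=
    { toFun := act g, map_add' := hadd g, map_smul' := hsmul g, norm_map' := hisom g }
  actₗᵢ.integral_comp_comm f

variable {G A : Type*} [Group G] [TopologicalSpace G] [IsTopologicalGroup G]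
  [MeasurableSpace G] [BorelSpace G] {μ : Measure G} [NormedRing A] [NormedAlgebra ℂ A]
  [CompleteSpace A] [μ.IsHaarMeasure] {act : G → A → A} {ξ : G → A} {α α' : G × G → A}

lemma ractKernel_conv2 (hact : Continuous fun p : G × A => act p.1 p.2)
    (hmul : ∀ g h a, act (g * h) a = act g (act h a))
    (hadd : ∀ g a b, act g (a + b) = act g a + act g b)
    (hsmul : ∀ g (c : ℂ) a, act g (c • a) = c • act g a)
    (hring : ∀ g a b, act g (a * b) = act g a * act g b) (hisom : ∀ g a, ‖act g a‖ = ‖a‖)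
    (hα : Continuous α) (hαs : HasCompactSupport α) (hα' : Continuous α') (s r : G) :
    ractKernel act ξ (conv2 μ act α α') s r =
      ∫ v, ractKernel act ξ α v r * act v (α' (v⁻¹ * s, v⁻¹)) ∂μ := by
  have hint : Integrable
      (fun u => act r (α (u, r⁻¹) * act u (α' (u⁻¹ * (r⁻¹ * s), u⁻¹ * r⁻¹)))) μ :=
    Continuous.integrable_of_hasCompactSupport (by fun_prop)
      ((hαs.comp_prodMk_const_s7 r⁻¹).mul_right.comp_left (act_zero_of_isometric hisom r))
  simp only [ractKernel, conv2]
  rw [← integral_act_comm hadd hsmul hisom, ← integral_const_mul_of_integrable hint,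
    ← integral_mul_left_eq_self (fun v => _ * act v (α' (v⁻¹ * s, v⁻¹))) r]
  refine integral_congr_ae (.of_forall fun u => ?_)
  simp only [hring, ← hmul, mul_assoc, mul_inv_rev, inv_mul_cancel_left]

lemma ract_conv2 (hact : Continuous fun p : G × A => act p.1 p.2)
    (hmul : ∀ g h a, act (g * h) a = act g (act h a))
    (hadd : ∀ g a b, act g (a + b) = act g a + act g b)
    (hsmul : ∀ g (c : ℂ) a, act g (c • a) = c • act g a)
    (hring : ∀ g a b, act g (a * b) = act g a * act g b) (hisom : ∀ g a, ‖act g a‖ = ‖a‖)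
    (hξ : Continuous ξ) (hξs : HasCompactSupport ξ) (hα : Continuous α)
    (hαs : HasCompactSupport α) (hα' : Continuous α') :
    ract μ act ξ (conv2 μ act α α') = ract μ act (ract μ act ξ α) α' := by
  funext s
  set Φ : G → G → A := fun v r => ractKernel act ξ α v r * act v (α' (v⁻¹ * s, v⁻¹))
  have hΦ : Continuous Φ.uncurry :=
    (continuous_ractKernel hact hξ hα).mul (hact.comp (continuous_fst.prodMk (hα'.comp
      ((continuous_fst.inv.mul continuous_const).prodMk continuous_fst.inv))))
  have hΦs : HasCompactSupport Φ.uncurry :=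
    (hasCompactSupport_ractKernel (act_zero_of_isometric hisom) hξs hαs).mul_right
  calc ract μ act ξ (conv2 μ act α α') s
      = ∫ r, ∫ v, Φ v r ∂μ ∂μ :=
        integral_congr_ae (.of_forall
          (ractKernel_conv2 hact hmul hadd hsmul hring hisom hα hαs hα' s))
    _ = ∫ v, ∫ r, Φ v r ∂μ ∂μ :=
        (integral_integral_swap_of_hasCompactSupport hΦ hΦs).symm
    _ = ∫ v, ract μ act ξ α v * act v (α' (v⁻¹ * s, v⁻¹)) ∂μ :=
        integral_congr_ae (.of_forall fun v =>
          integral_mul_const_of_integrable (integrable_ractKernel hact hξ hξs hα v))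
    _ = ract μ act (ract μ act ξ α) α' s := rfl

end Associativity

theorem stmt_7_general
    {G : Type*} [Group G] [TopologicalSpace G] [IsTopologicalGroup G]
    [MeasurableSpace G] [BorelSpace G]
    (μ : Measure G) [μ.IsHaarMeasure]
    {A : Type*} [NormedRing A] [NormedAlgebra ℂ A] [CompleteSpace A]
    -- `A` is a `G`-Banach algebra:
    (act : G → A → A)
    (hact_cont : Continuous fun p : G × A => act p.1 p.2)
    (hact_mul : ∀ g h a, act (g * h) a = act g (act h a))
    (hact_add : ∀ g a b, act g (a + b) = act g a + act g b)
    (hact_smul : ∀ g (c : ℂ) a, act g (c • a) = c • act g a)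
    (hact_ring : ∀ g a b, act g (a * b) = act g a * act g b)
    (hact_isom : ∀ g a, ‖act g a‖ = ‖a‖)
    -- `ξ^< ∈ C_c(G, A)` and `α, α' ∈ C_c(G×G, A)`:
    (ξl : G → A) (α α' : G × G → A)
    (hξlc : Continuous ξl) (hξls : HasCompactSupport ξl)
    (hαc : Continuous α) (hαs : HasCompactSupport α)
    (hα'c : Continuous α') :
    -- (i) associativity over convolution:
    ract μ act ξl (conv2 μ act α α') = ract μ act (ract μ act ξl α) α' ∧
    -- (ii) `‖ξ^< · α‖_{L¹} ≤ ‖ξ^<‖_{L¹} ‖α‖₁`: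
    (∫ s, ‖ract μ act ξl α s‖ ∂μ) ≤ (∫ s, ‖ξl s‖ ∂μ) * onenorm μ α :=
  ⟨ract_conv2 hact_cont hact_mul hact_add hact_smul hact_ring hact_isom hξlc hξls hαc hαs
      hα'c,
    integral_norm_ract_le hact_isom hξlc hξls hαc hαs⟩

/-- `L¹(G,A)` is a right Banach module over `L¹(G⋉G,A)`: the action
is associative over the convolution and contractive for the relevant norms. -/
theorem stmt_7
    {G : Type*} [Group G] [TopologicalSpace G] [IsTopologicalGroup G]
    [LocallyCompactSpace G] [T2Space G] [MeasurableSpace G] [BorelSpace G]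
    (μ : Measure G) [μ.IsHaarMeasure]
    {A : Type*} [NormedRing A] [NormedAlgebra ℂ A] [CompleteSpace A]
    -- `A` is a `G`-Banach algebra:
    (act : G → A → A)
    (hact_cont : Continuous fun p : G × A => act p.1 p.2)
    (hact_one : ∀ a, act 1 a = a)
    (hact_mul : ∀ g h a, act (g * h) a = act g (act h a))
    (hact_add : ∀ g a b, act g (a + b) = act g a + act g b)
    (hact_smul : ∀ g (c : ℂ) a, act g (c • a) = c • act g a)
    (hact_ring : ∀ g a b, act g (a * b) = act g a * act g b)
    (hact_isom : ∀ g a, ‖act g a‖ = ‖a‖)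
    -- `ξ^< ∈ C_c(G, A)` and `α, α' ∈ C_c(G×G, A)`:
    (ξl : G → A) (α α' : G × G → A)
    (hξlc : Continuous ξl) (hξls : HasCompactSupport ξl)
    (hαc : Continuous α) (hαs : HasCompactSupport α)
    (hα'c : Continuous α') (hα's : HasCompactSupport α') :
    -- (i) associativity over convolution:
    ract μ act ξl (conv2 μ act α α') = ract μ act (ract μ act ξl α) α' ∧
    -- (ii) `‖ξ^< · α‖_{L¹} ≤ ‖ξ^<‖_{L¹} ‖α‖₁`:
    (∫ s, ‖ract μ act ξl α s‖ ∂μ) ≤ (∫ s, ‖ξl s‖ ∂μ) * onenorm μ α :=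
  stmt_7_general μ act hact_cont hact_mul hact_add hact_smul hact_ring hact_isom ξl α α' hξlc hξls
    hαc hαs hα'c
end

section
/- Let G be a locally compact Hausdorff group with left Haar measure μ, let A, B, D be G-Banach algebras, let π : D → A be a surjective bounded G-equivariant algebra homomorphism, let ι : B → D be an injective bounded G-equivariant algebra homomorphism with ι(B) = ker π, and let σ : A → D be a bounded linear (not necessarily G-equivariant) map with π ∘ σ = id_A. Equip C_c(G×G, A) and C_c(G×G, D) with the convolution (ξ*η)(s,t) := ∫_G ξ(r,t)·(r·η(r⁻¹s, r⁻¹t)) dμ(r), the norm ‖ξ‖₁ := sup_{t} ∫_G ‖ξ(s,t)‖ dμ(s), and the G-action (r·ξ)(s,t) := ξ(s,tr). Define Π(ξ) := π ∘ ξ and Σ(η) := σ ∘ η. Then: (i) Π : C_c(G×G,D) → C_c(G×G,A) is an algebra homomorphism with ‖Π(ξ)‖₁ ≤ ‖π‖·‖ξ‖₁ which is G-equivariant; (ii) Σ : C_c(G×G,A) → C_c(G×G,D) is linear with Π ∘ Σ = id and ‖Σ(η)‖₁ ≤ ‖σ‖·‖η‖₁; (iii) Σ is G-equivariant: Σ(r·η)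 = r·Σ(η) for all r ∈ G; and (iv) for ξ ∈ C_c(G×G,D), Π(ξ) = 0 if and only if ξ takes all its values in ι(B). (This is the content of the theorem that the induced extension L¹(G⋉G,B) ↣ L¹(G⋉G,D) ↠ L¹(G⋉G,A) is equivariantly semi-split with equivariant continuous linear split L¹(G⋉G,σ).) -/
open MeasureTheory

/-!
`Π` and `Σ` are postcomposition with bounded linear maps. Such a map commutes with the action
`(r·ξ)(s,t) = ξ(s,tr)`, which only reparametrises the variables (so `Σ` is equivariant although
`σ` is not), and with Bochner integrals, which together with multiplicativity and equivariance of
`π` makes `Π` multiplicative for the convolution. The norm bounds are pointwise; the one analytic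
input is that `t ↦ ∫ ‖ξ (s,t)‖ dμ(s)` is bounded for `ξ ∈ C_c(G×G)`, so that the supremum
defining `‖ξ‖₁` is a genuine supremum rather than the junk value of `⨆`.
-/

lemma HasCompactSupport.comp_prodMkLeft {X Y E : Type*} [TopologicalSpace X] [TopologicalSpace Y]
    [T1Space Y] [Zero E] {f : X × Y → E} (hf : HasCompactSupport f) (y : Y) :
    HasCompactSupport fun x => f (x, y) := by
  refine hf.comp_isClosedEmbedding ⟨isEmbedding_prodMkLeft y, ?_⟩
  convert isClosed_univ.prod (isClosed_singleton (x := y))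
  ext ⟨x, y'⟩
  simp [eq_comm]

section OneNorm

variable {X E F : Type*} [MeasurableSpace X] (μ : Measure X)
  [NormedAddCommGroup E] [NormedAddCommGroup F]

lemma onenorm_le_mul_of_norm_le {f : X × X → E} {g : X × X → F} {C : ℝ} (hC : 0 ≤ C)
    (hf : ∀ t, Integrable (fun s => f (s, t)) μ)
    (hbdd : BddAbove (Set.range fun t => ∫ s, ‖f (s, t)‖ ∂μ))
    (hgf : ∀ p, ‖g p‖ ≤ C * ‖f p‖) : onenorm μ g ≤ C * onenorm μ f := by
  have honenorm_nonneg : 0 ≤ onenorm μ f :=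
    Real.iSup_nonneg fun _ => integral_nonneg fun _ => norm_nonneg _
  refine Real.iSup_le (fun t => ?_) (mul_nonneg hC honenorm_nonneg)
  calc ∫ s, ‖g (s, t)‖ ∂μ ≤ ∫ s, C * ‖f (s, t)‖ ∂μ :=
        integral_mono_of_nonneg (.of_forall fun _ => norm_nonneg _) ((hf t).norm.const_mul C)
          (.of_forall fun s => hgf (s, t))
    _ = C * ∫ s, ‖f (s, t)‖ ∂μ := integral_const_mul C _
    _ ≤ C * onenorm μ f := mul_le_mul_of_nonneg_left (le_ciSup hbdd t) hC

variable [TopologicalSpace X] [T2Space X] [OpensMeasurableSpace X] [IsFiniteMeasureOnCompacts μ]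

lemma Continuous.integrable_comp_prodMkLeft {f : X × X → E} (hf : Continuous f)
    (hfc : HasCompactSupport f) (t : X) : Integrable (fun s => f (s, t)) μ :=
  (hf.comp (.prodMk_left t)).integrable_of_hasCompactSupport (hfc.comp_prodMkLeft t)

lemma bddAbove_range_integral_norm_slice {f : X × X → E} (hf : Continuous f)
    (hfc : HasCompactSupport f) : BddAbove (Set.range fun t => ∫ s, ‖f (s, t)‖ ∂μ) := by
  obtain ⟨C, hC⟩ := hf.bounded_above_of_compact_support hfc
  set K := Prod.fst '' tsupport f
  have hK : IsCompact K := hfc.image continuous_fst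
  refine ⟨μ.real K • C, ?_⟩
  rintro _ ⟨t, rfl⟩
  rw [← integral_indicator_const C hK.measurableSet]
  refine integral_mono_of_nonneg (.of_forall fun _ => norm_nonneg _)
    ((integrable_indicator_iff hK.measurableSet).2 (integrableOn_const hK.measure_ne_top))
    (.of_forall fun s => ?_)
  by_cases hs : s ∈ K
  · simpa [Set.indicator_of_mem hs] using hC (s, t)
  · have : f (s, t) = 0 := image_eq_zero_of_notMem_tsupport fun h => hs ⟨_, h, rfl⟩
    simp [Set.indicator_of_notMem hs, this]

lemma onenorm_comp_le {𝕜 : Type*} [NontriviallyNormedField 𝕜] [NormedSpace 𝕜 E]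
    [NormedSpace 𝕜 F] (T : E →L[𝕜] F) {f : X × X → E} (hf : Continuous f)
    (hfc : HasCompactSupport f) : onenorm μ (fun p => T (f p)) ≤ ‖T‖ * onenorm μ f :=
  onenorm_le_mul_of_norm_le μ (norm_nonneg T) (hf.integrable_comp_prodMkLeft μ hfc)
    (bddAbove_range_integral_norm_slice μ hf hfc) fun p => T.le_opNorm (f p)

end OneNorm

section Convolution

variable {G : Type*} [Group G] [TopologicalSpace G] [IsTopologicalGroup G] [T1Space G]
  [MeasurableSpace G] [OpensMeasurableSpace G] (μ : Measure G) [IsFiniteMeasureOnCompacts μ]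
  {A D : Type*} [NormedRing A] [NormedRing D]

lemma integrable_conv2_integrand {actD : G → D → D}
    (hact : Continuous fun p : G × D => actD p.1 p.2) {ξ η : G × G → D} (hξ : Continuous ξ)
    (hξc : HasCompactSupport ξ) (hη : Continuous η) (p : G × G) :
    Integrable (fun r => ξ (r, p.2) * actD r (η (r⁻¹ * p.1, r⁻¹ * p.2))) μ :=
  ((hξ.comp (.prodMk_left p.2)).mul (hact.comp (continuous_id.prodMk (hη.comp (by fun_prop)))))
    |>.integrable_of_hasCompactSupport (hξc.comp_prodMkLeft p.2).mul_right

variable [NormedAlgebra ℂ A] [CompleteSpace A] [NormedAlgebra ℂ D] [CompleteSpace D]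

lemma map_conv2 {actA : G → A → A} {actD : G → D → D}
    (hactD : Continuous fun p : G × D => actD p.1 p.2) (T : D →L[ℂ] A)
    (hT_mul : ∀ x y, T (x * y) = T x * T y) (hT_equi : ∀ g d, T (actD g d) = actA g (T d))
    {ξ η : G × G → D} (hξ : Continuous ξ) (hξc : HasCompactSupport ξ) (hη : Continuous η) :
    (fun p => T (conv2 μ actD ξ η p)) = conv2 μ actA (fun p => T (ξ p)) (fun p => T (η p)) := by
  funext p
  rw [conv2, ← T.integral_comp_comm (integrable_conv2_integrand μ hactD hξ hξc hη p)]
  simp only [hT_mul, hT_equi, conv2]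

end Convolution

theorem stmt_9_general
    {G : Type*} [Group G] [TopologicalSpace G] [IsTopologicalGroup G]
    [T2Space G] [MeasurableSpace G] [BorelSpace G]
    (μ : Measure G) [μ.IsHaarMeasure]
    {A B D : Type*}
    [NormedRing A] [NormedAlgebra ℂ A] [CompleteSpace A]
    [NormedRing B] [NormedAlgebra ℂ B]
    [NormedRing D] [NormedAlgebra ℂ D] [CompleteSpace D]
    -- `A` is a `G`-Banach algebra:
    (actA : G → A → A)
    -- `D` is a `G`-Banach algebra:
    (actD : G → D → D)
    (hactD_cont : Continuous fun p : G × D => actD p.1 p.2)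
    -- the extension `B ↣ D ↠ A` with bounded linear split `σ`:
    (π : D →L[ℂ] A) (hπ_mul : ∀ x y : D, π (x * y) = π x * π y)
    (hπ_equi : ∀ g d, π (actD g d) = actA g (π d))
    (ι : B →L[ℂ] D)
    (hker : Set.range ι = {d : D | π d = 0})
    (σ : A →L[ℂ] D) (hσ : ∀ a, π (σ a) = a) :
    -- (i) `Π := π ∘ ·` is a `G`-equivariant bounded homomorphism
    --     `C_c(G×G,D) → C_c(G×G,A)`:
    (∀ ξ η : G × G → D,
      Continuous ξ → HasCompactSupport ξ → Continuous η → HasCompactSupport η →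
      Continuous (fun p : G × G => π (ξ p)) ∧
      HasCompactSupport (fun p : G × G => π (ξ p)) ∧
      (fun p : G × G => π (conv2 μ actD ξ η p))
        = conv2 μ actA (fun p => π (ξ p)) (fun p => π (η p)) ∧
      onenorm μ (fun p : G × G => π (ξ p)) ≤ ‖π‖ * onenorm μ ξ ∧
      (∀ r : G, (fun p : G × G => π ((fun q : G × G => ξ (q.1, q.2 * r)) p))
          = fun p : G × G => (fun q : G × G => π (ξ q)) (p.1, p.2 * r))) ∧
    -- (ii) `Σ := σ ∘ ·` is a bounded linear split of `Π`:
    (∀ η : G × G → A, Continuous η → HasCompactSupport η →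
      (fun p : G × G => π (σ (η p))) = η ∧
      onenorm μ (fun p : G × G => σ (η p)) ≤ ‖σ‖ * onenorm μ η) ∧
    (∀ (η η' : G × G → A) (c : ℂ),
      (fun p : G × G => σ ((η + η') p)) =
        (fun p : G × G => σ (η p)) + (fun p : G × G => σ (η' p)) ∧
      (fun p : G × G => σ ((c • η) p)) = c • fun p : G × G => σ (η p)) ∧
    -- (iii) `Σ` is `G`-equivariant:
    (∀ (η : G × G → A) (r : G),
      (fun p : G × G => σ ((fun q : G × G => η (q.1, q.2 * r)) p))
        = fun p : G × G => (fun q : G × G => σ (η q)) (p.1, p.2 * r)) ∧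
    -- (iv) the kernel of `Π` consists of the functions with values in `ι(B)`:
    (∀ ξ : G × G → D, Continuous ξ → HasCompactSupport ξ →
      ((fun p : G × G => π (ξ p)) = 0 ↔ ∀ p : G × G, ξ p ∈ Set.range ι)) := by
  refine ⟨fun ξ η hξ hξc hη _ => ⟨π.continuous.comp hξ, hξc.comp_left π.map_zero,
      map_conv2 μ hactD_cont π hπ_mul hπ_equi hξ hξc hη, onenorm_comp_le μ π hξ hξc,
      fun _ => rfl⟩,
    fun η hη hηc => ⟨funext fun p => hσ (η p), onenorm_comp_le μ σ hη hηc⟩,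
    fun η η' c => ⟨funext fun p => σ.map_add (η p) (η' p), funext fun p => σ.map_smul c (η p)⟩,
    fun _ _ => rfl, fun ξ _ _ => ?_⟩
  rw [hker]
  exact funext_iff

/-- A semi-split `G`-equivariant extension `B ↣ D ↠ A` with bounded
linear split `σ` induces, by postcomposition of `C_c(G×G,·)`-functions, an extension
`L¹(G⋉G,B) ↣ L¹(G⋉G,D) ↠ L¹(G⋉G,A)` which is equivariantly semi-split with
`G`-equivariant bounded linear split `L¹(G⋉G,σ)`. -/
theorem stmt_9
    {G : Type*} [Group G] [TopologicalSpace G] [IsTopologicalGroup G]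
    [LocallyCompactSpace G] [T2Space G] [MeasurableSpace G] [BorelSpace G]
    (μ : Measure G) [μ.IsHaarMeasure]
    {A B D : Type*}
    [NormedRing A] [NormedAlgebra ℂ A] [CompleteSpace A]
    [NormedRing B] [NormedAlgebra ℂ B] [CompleteSpace B]
    [NormedRing D] [NormedAlgebra ℂ D] [CompleteSpace D]
    -- `A` is a `G`-Banach algebra:
    (actA : G → A → A)
    (hactA_cont : Continuous fun p : G × A => actA p.1 p.2)
    (hactA_one : ∀ a, actA 1 a = a)
    (hactA_mul : ∀ g h a, actA (g * h) a = actA g (actA h a))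
    (hactA_add : ∀ g a b, actA g (a + b) = actA g a + actA g b)
    (hactA_smul : ∀ g (c : ℂ) a, actA g (c • a) = c • actA g a)
    (hactA_ring : ∀ g a b, actA g (a * b) = actA g a * actA g b)
    (hactA_isom : ∀ g a, ‖actA g a‖ = ‖a‖)
    -- `B` is a `G`-Banach algebra:
    (actB : G → B → B)
    (hactB_cont : Continuous fun p : G × B => actB p.1 p.2)
    (hactB_one : ∀ b, actB 1 b = b)
    (hactB_mul : ∀ g h b, actB (g * h) b = actB g (actB h b))
    (hactB_add : ∀ g b b', actB g (b + b') = actB g b + actB g b')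
    (hactB_smul : ∀ g (c : ℂ) b, actB g (c • b) = c • actB g b)
    (hactB_ring : ∀ g b b', actB g (b * b') = actB g b * actB g b')
    (hactB_isom : ∀ g b, ‖actB g b‖ = ‖b‖)
    -- `D` is a `G`-Banach algebra:
    (actD : G → D → D)
    (hactD_cont : Continuous fun p : G × D => actD p.1 p.2)
    (hactD_one : ∀ d, actD 1 d = d)
    (hactD_mul : ∀ g h d, actD (g * h) d = actD g (actD h d))
    (hactD_add : ∀ g d d', actD g (d + d') = actD g d + actD g d')
    (hactD_smul : ∀ g (c : ℂ) d, actD g (c • d) = c • actD g d)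
    (hactD_ring : ∀ g d d', actD g (d * d') = actD g d * actD g d')
    (hactD_isom : ∀ g d, ‖actD g d‖ = ‖d‖)
    -- the extension `B ↣ D ↠ A` with bounded linear split `σ`:
    (π : D →L[ℂ] A) (hπ_mul : ∀ x y : D, π (x * y) = π x * π y)
    (hπ_surj : Function.Surjective π)
    (hπ_equi : ∀ g d, π (actD g d) = actA g (π d))
    (ι : B →L[ℂ] D) (hι_mul : ∀ x y : B, ι (x * y) = ι x * ι y)
    (hι_inj : Function.Injective ι)
    (hι_equi : ∀ g b, ι (actB g b) = actD g (ι b))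
    (hker : Set.range ι = {d : D | π d = 0})
    (σ : A →L[ℂ] D) (hσ : ∀ a, π (σ a) = a) :
    -- (i) `Π := π ∘ ·` is a `G`-equivariant bounded homomorphism
    --     `C_c(G×G,D) → C_c(G×G,A)`:
    (∀ ξ η : G × G → D,
      Continuous ξ → HasCompactSupport ξ → Continuous η → HasCompactSupport η →
      Continuous (fun p : G × G => π (ξ p)) ∧
      HasCompactSupport (fun p : G × G => π (ξ p)) ∧
      (fun p : G × G => π (conv2 μ actD ξ η p))
        = conv2 μ actA (fun p => π (ξ p)) (fun p => π (η p)) ∧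
      onenorm μ (fun p : G × G => π (ξ p)) ≤ ‖π‖ * onenorm μ ξ ∧
      (∀ r : G, (fun p : G × G => π ((fun q : G × G => ξ (q.1, q.2 * r)) p))
          = fun p : G × G => (fun q : G × G => π (ξ q)) (p.1, p.2 * r))) ∧
    -- (ii) `Σ := σ ∘ ·` is a bounded linear split of `Π`:
    (∀ η : G × G → A, Continuous η → HasCompactSupport η →
      (fun p : G × G => π (σ (η p))) = η ∧
      onenorm μ (fun p : G × G => σ (η p)) ≤ ‖σ‖ * onenorm μ η) ∧
    (∀ (η η' : G × G → A) (c : ℂ),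
      (fun p : G × G => σ ((η + η') p)) =
        (fun p : G × G => σ (η p)) + (fun p : G × G => σ (η' p)) ∧
      (fun p : G × G => σ ((c • η) p)) = c • fun p : G × G => σ (η p)) ∧
    -- (iii) `Σ` is `G`-equivariant:
    (∀ (η : G × G → A) (r : G),
      (fun p : G × G => σ ((fun q : G × G => η (q.1, q.2 * r)) p))
        = fun p : G × G => (fun q : G × G => σ (η q)) (p.1, p.2 * r)) ∧
    -- (iv) the kernel of `Π` consists of the functions with values in `ι(B)`:
    (∀ ξ : G × G → D, Continuous ξ → HasCompactSupport ξ →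
      ((fun p : G × G => π (ξ p)) = 0 ↔ ∀ p : G × G, ξ p ∈ Set.range ι)) :=
  stmt_9_general μ actA actD hactD_cont π hπ_mul hπ_equi ι hker σ hσ
end
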